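/- arXiv:1702.08220 — 8 statements merged into one kernel-verified Lean document; each statement's English description precedes it below -/
import Mathlib

section
/- Let M > 0 and ω > 0 satisfy ωM² ≥ 1/2, and set r± = M(1 ± √(1 − 1/(2ωM²))). Then r± > 0 and f(r₊) = 0 and f(r₋) = 0, i.e. the KS metric function vanishes exactly at the two horizon radii r±. -/
/-- The Kehagias–Sfetsos metric function
`f(r) = 1 + ω r² − √(r (ω² r³ + 4 ω M))`. -/
noncomputable def KSf (ω M r : ℝ) : ℝ :=
  1 + ω * r ^ 2 - Real.sqrt (r * (ω ^ 2 * r ^ 3 + 4 * ω * M))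

lemma KSf_root (ω M r : ℝ) (hω : 0 < ω) (hr : 0 ≤ r)
    (hcond : 1 + 2 * ω * r ^ 2 = 4 * ω * M * r) : KSf ω M r = 0 := by
  have hpos : 0 ≤ 1 + ω * r ^ 2 := by positivity
  have key : r * (ω ^ 2 * r ^ 3 + 4 * ω * M) = (1 + ω * r ^ 2) ^ 2 := by
    have : 4 * ω * M * r = 1 + 2 * ω * r ^ 2 := hcond.symm
    nlinarith [this]
  unfold KSf
  rw [key, Real.sqrt_sq hpos]
  ring

/-- For `ω M² ≥ 1/2`, the KS metric function vanishes at the two horizon radii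
`r± = M (1 ± √(1 − 1/(2 ω M²)))`, which are both positive. -/
theorem ks_horizons (M ω : ℝ) (hM : 0 < M) (hω : 0 < ω)
    (h : ω * M ^ 2 ≥ 1 / 2)
    (rp rm : ℝ)
    (hrp : rp = M * (1 + Real.sqrt (1 - 1 / (2 * ω * M ^ 2))))
    (hrm : rm = M * (1 - Real.sqrt (1 - 1 / (2 * ω * M ^ 2)))) :
    0 < rp ∧ 0 < rm ∧ KSf ω M rp = 0 ∧ KSf ω M rm = 0 := by
  set s := Real.sqrt (1 - 1 / (2 * ω * M ^ 2)) with hs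
  have hden : 0 < 2 * ω * M ^ 2 := by positivity
  have harg : 0 ≤ 1 - 1 / (2 * ω * M ^ 2) := by
    rw [sub_nonneg, div_le_one hden]; linarith
  have hs0 : 0 ≤ s := Real.sqrt_nonneg _
  have hssq : s ^ 2 = 1 - 1 / (2 * ω * M ^ 2) := Real.sq_sqrt harg
  have hs1 : s < 1 := by
    nlinarith [one_div_pos.mpr hden]
  have hrp0 : 0 < rp := by rw [hrp]; positivity
  have hrm0 : 0 < rm := by rw [hrm]; nlinarith
  have hkey : s ^ 2 * (2 * ω * M ^ 2) = 2 * ω * M ^ 2 - 1 := by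
    rw [hssq]; field_simp
  refine ⟨hrp0, hrm0, KSf_root ω M rp hω hrp0.le ?_, KSf_root ω M rm hω hrm0.le ?_⟩
  · rw [hrp]; nlinarith [hkey]
  · rw [hrm]; nlinarith [hkey]
end

section
/- Let M > 0 and ω > 0 satisfy ωM² < 1/2. Then f(r) > 0 for every r ≥ 0; in particular the KS metric function has no zeros, so the spacetime has no horizons and the singularity at r = 0 is naked. -/
/-- For `ω M² < 1/2` the KS metric function is strictly positive for all `r ≥ 0`:
there are no horizons, so the singularity at `r = 0` is naked. -/
theorem ks_naked_no_horizons (M ω : ℝ) (hM : 0 < M) (hω : 0 < ω)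
    (h : ω * M ^ 2 < 1 / 2) :
    ∀ r : ℝ, 0 ≤ r → 0 < KSf ω M r := by
  intro r hr
  have h1 : 0 < 1 + ω * r ^ 2 := by positivity
  have h2 : Real.sqrt (r * (ω ^ 2 * r ^ 3 + 4 * ω * M)) < 1 + ω * r ^ 2 := by
    rw [Real.sqrt_lt' h1]
    nlinarith [mul_nonneg hω.le (sq_nonneg (r - M))]
  unfold KSf
  linarith
end

section
/- Let M > 0 and ω > 0. Then, as r → ∞, the function r ↦ f(r) − (1 − 2M/r) is O(r⁻⁴); that is, the KS metric function satisfies f(r) ≈ 1 − 2M/r + O(r⁻⁴) at large r, recovering the Schwarzschild behavior. -/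
open Filter Asymptotics

/-- At large `r`, the KS metric function satisfies
`f(r) = 1 − 2M/r + O(r⁻⁴)`, recovering the Schwarzschild behavior. -/
theorem ks_schwarzschild_limit (M ω : ℝ) (hM : 0 < M) (hω : 0 < ω) :
    (fun r : ℝ => KSf ω M r - (1 - 2 * M / r)) =O[atTop]
      (fun r : ℝ => r ^ (-4 : ℤ)) := by
  rw [isBigO_iff]
  refine ⟨4 * M ^ 2 / ω, ?_⟩
  filter_upwards [eventually_gt_atTop 0] with r hr
  have hS : (0:ℝ) ≤ r * (ω ^ 2 * r ^ 3 + 4 * ω * M) := by positivity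
  set b := Real.sqrt (r * (ω ^ 2 * r ^ 3 + 4 * ω * M)) with hbdef
  have hb0 : 0 ≤ b := Real.sqrt_nonneg _
  have hb2 : b ^ 2 = r * (ω ^ 2 * r ^ 3 + 4 * ω * M) := Real.sq_sqrt hS
  have hblb : ω * r ^ 2 ≤ b := by
    rw [hbdef]
    calc ω * r ^ 2 = Real.sqrt ((ω * r ^ 2) ^ 2) := by rw [Real.sqrt_sq (by positivity)]
      _ ≤ _ := Real.sqrt_le_sqrt (by nlinarith [mul_pos (mul_pos hω hM) hr])
  have hub : b < ω * r ^ 2 + 2 * M / r := by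
    have h1 : b ^ 2 < (ω * r ^ 2 + 2 * M / r) ^ 2 := by
      rw [hb2]
      have : (ω * r ^ 2 + 2 * M / r) ^ 2
          = r * (ω ^ 2 * r ^ 3 + 4 * ω * M) + 4 * M ^ 2 / r ^ 2 := by
        field_simp; ring
      rw [this]
      have : 0 < 4 * M ^ 2 / r ^ 2 := by positivity
      linarith
    have hA : 0 < ω * r ^ 2 + 2 * M / r := by positivity
    nlinarith [hA, hb0]
  have key : KSf ω M r - (1 - 2 * M / r) = ω * r ^ 2 + 2 * M / r - b := by
    simp only [KSf, ← hbdef]; ring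
  rw [key]
  have habs : |ω * r ^ 2 + 2 * M / r - b| = ω * r ^ 2 + 2 * M / r - b := by
    rw [abs_of_nonneg]; linarith
  have hzpow : (r : ℝ) ^ (-4 : ℤ) = (r ^ 4)⁻¹ := by
    rw [zpow_neg, zpow_ofNat]
  rw [Real.norm_eq_abs, Real.norm_eq_abs, habs, hzpow,
    abs_of_nonneg (by positivity : (0:ℝ) ≤ (r ^ 4)⁻¹)]
  -- (A - b) * (A + b) = 4 M² / r², and A + b ≥ 2 ω r² ≥ ω r²
  have hdiff : (ω * r ^ 2 + 2 * M / r - b) * (ω * r ^ 2 + 2 * M / r + b)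
      = 4 * M ^ 2 / r ^ 2 := by
    have : (ω * r ^ 2 + 2 * M / r) ^ 2 - b ^ 2 = 4 * M ^ 2 / r ^ 2 := by
      rw [hb2]; field_simp; ring
    nlinarith [this]
  have hsum : ω * r ^ 2 ≤ ω * r ^ 2 + 2 * M / r + b := by
    have : 0 < 2 * M / r := by positivity
    linarith
  have hr4 : (0:ℝ) < r ^ 4 := by positivity
  have hr2 : (0:ℝ) < r ^ 2 := by positivity
  rw [div_mul_eq_mul_div, le_div_iff₀ hω, show (4:ℝ) * M ^ 2 * (r ^ 4)⁻¹ = 4 * M ^ 2 / r ^ 4 by ring, le_div_iff₀ hr4]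
  -- D * ω * r^4 ≤ 4 M²
  have hd0 : 0 ≤ ω * r ^ 2 + 2 * M / r - b := by linarith
  have hdiff2 : (ω * r ^ 2 + 2 * M / r - b) * (ω * r ^ 2 + 2 * M / r + b) * r ^ 2
      = 4 * M ^ 2 := by
    rw [hdiff]; field_simp
  nlinarith [mul_le_mul_of_nonneg_left hsum hd0, sq_nonneg r, mul_pos hr hr,
    mul_le_mul_of_nonneg_right (mul_le_mul_of_nonneg_left hsum hd0) (le_of_lt hr2)]
end

section
/- For every r₀ with 0 < r₀ < 1/2, the coordinate time needed by a radial photon to reach the singularity is finite and given exactly by ∫₀^{r₀} dr/(1 − √(2r)) = −√(2r₀) − ln(1 − √(2r₀)). In particular this quantity is finite and positive. -/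
open MeasureTheory intervalIntegral

/-!
Substituting `s = √(2r)` turns the integrand into `s / (1 - s) ds`, whose antiderivative is
`-s - log (1 - s)`. Since `√(2r) < 1` on `[0, r₀]`, the integrand is continuous there and the
fundamental theorem of calculus applies; positivity is `log (1 - s) < -s`.
-/

namespace Real

lemma sqrt_two_mul_lt_one {r : ℝ} (hr : r < 1 / 2) : √(2 * r) < 1 :=
  (sqrt_lt' one_pos).2 (by linarith)

lemma neg_sub_log_one_sub_pos {s : ℝ} (hs0 : 0 < s) (hs1 : s < 1) : 0 < -s - log (1 - s) := by
  have := log_lt_sub_one_of_pos (sub_pos.2 hs1) (by linarith)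
  linarith

lemma hasDerivAt_neg_sub_log_one_sub {s : ℝ} (hs : s < 1) :
    HasDerivAt (fun s => -s - log (1 - s)) (s / (1 - s)) s := by
  have h1s : 1 - s ≠ 0 := by linarith
  refine ((hasDerivAt_id' s).neg.sub (((hasDerivAt_id' s).const_sub 1).log h1s)).congr_deriv ?_
  field_simp
  ring

lemma hasDerivAt_sqrt_two_mul {r : ℝ} (hr : 0 < r) :
    HasDerivAt (fun x => √(2 * x)) (1 / √(2 * r)) r := by
  refine (((hasDerivAt_id' r).const_mul 2).sqrt (by positivity)).congr_deriv ?_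
  field_simp

lemma hasDerivAt_neg_sqrt_two_mul_sub_log {r : ℝ} (hr0 : 0 < r) (hr1 : r < 1 / 2) :
    HasDerivAt (fun x => -√(2 * x) - log (1 - √(2 * x))) (1 / (1 - √(2 * r))) r := by
  have hs : 0 < √(2 * r) := sqrt_pos.2 (by positivity)
  refine ((hasDerivAt_neg_sub_log_one_sub (sqrt_two_mul_lt_one hr1)).comp r
    (hasDerivAt_sqrt_two_mul hr0)).congr_deriv ?_
  field_simp

lemma one_sub_sqrt_two_mul_ne_zero {r : ℝ} (hr : r ∈ Set.Iio (1 / 2)) : 1 - √(2 * r) ≠ 0 :=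
  (sub_pos.2 (sqrt_two_mul_lt_one hr)).ne'

lemma continuousOn_one_div_one_sub_sqrt_two_mul :
    ContinuousOn (fun r => 1 / (1 - √(2 * r))) (Set.Iio (1 / 2)) :=
  continuousOn_const.div (by fun_prop) fun _ => one_sub_sqrt_two_mul_ne_zero

lemma continuousOn_neg_sqrt_two_mul_sub_log :
    ContinuousOn (fun r => -√(2 * r) - log (1 - √(2 * r))) (Set.Iio (1 / 2)) :=
  (by fun_prop : Continuous fun r => -√(2 * r)).continuousOn.sub
    ((by fun_prop : Continuous fun r => 1 - √(2 * r)).continuousOn.log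
      fun _ => one_sub_sqrt_two_mul_ne_zero)

end Real

/-- For `0 < r₀ < 1/2`, the coordinate time for a radial photon to reach the
KS naked singularity, `∫₀^{r₀} dr/(1 − √(2r))`, is finite and equals
`−√(2r₀) − ln(1 − √(2r₀))`, a positive quantity. -/
theorem ks_photon_time (r₀ : ℝ) (h0 : 0 < r₀) (h1 : r₀ < 1 / 2) :
    IntervalIntegrable (fun r : ℝ => 1 / (1 - Real.sqrt (2 * r)))
      MeasureTheory.volume 0 r₀ ∧
    (∫ r in (0 : ℝ)..r₀, 1 / (1 - Real.sqrt (2 * r))) =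
      -Real.sqrt (2 * r₀) - Real.log (1 - Real.sqrt (2 * r₀)) ∧
    0 < -Real.sqrt (2 * r₀) - Real.log (1 - Real.sqrt (2 * r₀)) := by
  have hsub : Set.uIcc 0 r₀ ⊆ Set.Iio (1 / 2) := by
    rw [Set.uIcc_of_le h0.le]
    exact fun r hr => hr.2.trans_lt h1
  have hint : IntervalIntegrable _ volume 0 r₀ :=
    (Real.continuousOn_one_div_one_sub_sqrt_two_mul.mono hsub).intervalIntegrable
  refine ⟨hint, ?_, Real.neg_sub_log_one_sub_pos (Real.sqrt_pos.2 (by positivity))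
    (Real.sqrt_two_mul_lt_one h1)⟩
  rw [integral_eq_sub_of_hasDerivAt_of_le h0.le
    (Real.continuousOn_neg_sqrt_two_mul_sub_log.mono (Set.Icc_subset_uIcc.trans hsub))
    (fun r hr => Real.hasDerivAt_neg_sqrt_two_mul_sub_log hr.1 (hr.2.trans h1)) hint]
  simp
end

section
/- Let l be a natural number and γ₂ = −(7 + √(49 + 16 l(l+1)))/4. Then the function r ↦ r^{2γ₂}·r²/(1 − √(2r)) is not integrable on the interval (0, 1/4); that is, the radial solution R(r) = r^{γ₂} of the near-singularity Klein–Gordon equation has divergent squared norm ∫₀ r²|R(r)|²/(1 − √(2r)) dr and hence does not belong to the Hilbert space L². -/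
open MeasureTheory

/-- The near-singularity Klein–Gordon radial solution `R(r) = r^{γ₂}` with
`γ₂ = −(7 + √(49 + 16 l(l+1)))/4` has divergent squared norm
`∫₀ r² |R(r)|² / (1 − √(2r)) dr` near `r = 0`: the integrand
`r^{2γ₂} r² / (1 − √(2r))` is not integrable on `(0, 1/4)`, so the solution
does not belong to the Hilbert space `L²`. -/
theorem ks_kg_not_square_integrable_at_zero (l : ℕ) (γ₂ : ℝ)
    (hγ : γ₂ = -(7 + Real.sqrt (49 + 16 * (l * (l + 1) : ℝ))) / 4) :
    ¬ IntegrableOn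
        (fun r : ℝ => r ^ (2 * γ₂) * r ^ 2 / (1 - Real.sqrt (2 * r)))
        (Set.Ioo 0 (1 / 4)) volume := by
  intro h
  have hsq : (7 : ℝ) ≤ Real.sqrt (49 + 16 * (l * (l + 1) : ℝ)) := by
    have : (7 : ℝ) = Real.sqrt 49 := by
      rw [show (49 : ℝ) = 7 ^ 2 by norm_num, Real.sqrt_sq (by norm_num)]
    rw [this]
    apply Real.sqrt_le_sqrt
    nlinarith [Nat.cast_nonneg (α := ℝ) l]
  have hexp : 2 * γ₂ + 2 ≤ -3/2 := by rw [hγ]; nlinarith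
  have hint : IntegrableOn (fun x : ℝ => x ^ (2 * γ₂ + 2)) (Set.Ioo 0 (1/4)) volume := by
    apply h.mono' ((continuousOn_id.rpow_const
      (fun x hx => Or.inl hx.1.ne')).aestronglyMeasurable measurableSet_Ioo)
    filter_upwards [ae_restrict_mem measurableSet_Ioo] with x hx
    have hx0 : 0 < x := hx.1
    have hs : Real.sqrt (2 * x) < 1 := by
      have : Real.sqrt (2 * x) < Real.sqrt 1 := by
        apply Real.sqrt_lt_sqrt (by positivity)
        nlinarith [hx.2]
      simpa using this
    have hden : 0 < 1 - Real.sqrt (2 * x) := by linarith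
    simp only [id]
    rw [Real.norm_eq_abs, abs_of_nonneg (Real.rpow_nonneg hx0.le _),
      Real.rpow_add hx0, Real.rpow_two]
    rw [le_div_iff₀ hden]
    have hnn : 0 ≤ x ^ (2 * γ₂) * x ^ 2 := by positivity
    nlinarith [Real.sqrt_nonneg (2 * x), Real.rpow_nonneg hx0.le (2 * γ₂)]
  rw [intervalIntegral.integrableOn_Ioo_rpow_iff (by norm_num : (0:ℝ) < 1/4)] at hint
  linarith
end

section
/- Let κ ∈ ℂ with κ ≠ 0. Then the function r ↦ (r³/(r−1))·|sin(κr)/r|² = (r/(r−1))·|sin(κr)|² is not integrable on (2, ∞); that is, the large-r radial solution R(r) = sin(κr)/r fails the square-integrability condition ‖R‖² = ∫ r³|R(r)|²/(r−1) dr < ∞ and hence does not belong to the Hilbert space. -/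
/-!
Write `κ r = x + i y` with `x = (Re κ) r`, `y = (Im κ) r`. Then
`|sin (κ r)|² = sin² x + sinh² y`, and the weight `r / (r - 1)` is at least `1`, so it suffices
that `|sin (κ r)|²` is not integrable on a half-line. If `Im κ ≠ 0` then `sinh² y ≥ y² ≥ 1` for
large `r`. If `a = Re κ ≠ 0`, integrability of `sin² (a r)` would, after the translation
`r ↦ r + π / (2a)`, give integrability of `cos² (a r)` as well, hence of `sin² + cos² = 1`.
-/

open MeasureTheory Set Filter

theorem Complex.sq_norm_sin (z : ℂ) :
    ‖Complex.sin z‖ ^ 2 = Real.sin z.re ^ 2 + Real.sinh z.im ^ 2 := by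
  have hsin : Complex.sin z = (Real.sin z.re * Real.cosh z.im : ℝ)
      + (Real.cos z.re * Real.sinh z.im : ℝ) * Complex.I := by
    conv_lhs => rw [← Complex.re_add_im z, Complex.sin_add_mul_I]
    push_cast [Complex.ofReal_sin, Complex.ofReal_cos, Complex.ofReal_sinh, Complex.ofReal_cosh]
    ring
  rw [hsin, Complex.sq_norm, Complex.normSq_add_mul_I]
  nlinarith [Real.sin_sq_add_cos_sq z.re, Real.cosh_sq z.im]

theorem Real.sq_le_sinh_sq (x : ℝ) : x ^ 2 ≤ Real.sinh x ^ 2 := by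
  rw [sq_le_sq, Real.abs_sinh]
  exact Real.self_le_sinh_iff.mpr (abs_nonneg x)

theorem MeasureTheory.not_integrableOn_Ioi_of_eventually_le_norm {E : Type*}
    [NormedAddCommGroup E] {f : ℝ → E} {ε : ℝ} (hε : 0 < ε) (hf : ∀ᶠ r in atTop, ε ≤ ‖f r‖)
    (c : ℝ) : ¬ IntegrableOn f (Ioi c) := by
  intro hint
  obtain ⟨M, hM⟩ := eventually_atTop.mp hf
  have hconst : IntegrableOn (fun _ => ε) (Ioi (max c M)) := by
    refine (hint.mono_set (Ioi_subset_Ioi (le_max_left c M))).norm.mono'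
      aestronglyMeasurable_const ?_
    filter_upwards [ae_restrict_mem measurableSet_Ioi] with r hr
    rw [Real.norm_of_nonneg hε.le]
    exact hM r (le_max_right c M |>.trans (le_of_lt hr))
  simp [integrableOn_const_iff, hε.ne', Real.volume_Ioi] at hconst

theorem MeasureTheory.IntegrableOn.comp_add_right_Ioi {E : Type*} [NormedAddCommGroup E]
    {f : ℝ → E} {c : ℝ} (hf : IntegrableOn f (Ioi c)) (T : ℝ) :
    IntegrableOn (fun r => f (r + T)) (Ioi (c - T)) := by
  have h := ((measurePreserving_add_right volume T).integrableOn_comp_preimage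
    (Homeomorph.addRight T).measurableEmbedding).mpr hf
  rwa [preimage_add_const_Ioi] at h

theorem Real.not_integrableOn_Ioi_sin_mul_sq {a : ℝ} (ha : a ≠ 0) (c : ℝ) :
    ¬ IntegrableOn (fun r => Real.sin (a * r) ^ 2) (Ioi c) := by
  intro hint
  set T := Real.pi / (2 * a) with hT
  have hsum : IntegrableOn (fun r => Real.sin (a * r) ^ 2 + Real.sin (a * (r + T)) ^ 2)
      (Ioi (max c (c - T))) :=
    (hint.mono_set (Ioi_subset_Ioi (le_max_left _ _))).add
      ((hint.comp_add_right_Ioi T).mono_set (Ioi_subset_Ioi (le_max_right _ _)))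
  refine not_integrableOn_Ioi_of_eventually_le_norm one_pos (Eventually.of_forall fun r => ?_)
    _ hsum
  have hshift : a * (r + T) = a * r + Real.pi / 2 := by rw [hT]; field_simp
  rw [hshift, Real.sin_add_pi_div_two, Real.sin_sq_add_cos_sq, norm_one]

theorem Complex.not_integrableOn_Ioi_sq_norm_sin_mul {κ : ℂ} (hκ : κ ≠ 0) (c : ℝ) :
    ¬ IntegrableOn (fun r : ℝ => ‖Complex.sin (κ * r)‖ ^ 2) (Ioi c) := by
  have hsq (r : ℝ) : ‖Complex.sin (κ * r)‖ ^ 2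
      = Real.sin (κ.re * r) ^ 2 + Real.sinh (κ.im * r) ^ 2 := by
    simp [Complex.sq_norm_sin]
  by_cases hre : κ.re = 0
  · have him : κ.im ≠ 0 := fun him => hκ (Complex.ext hre him)
    refine not_integrableOn_Ioi_of_eventually_le_norm one_pos ?_ c
    filter_upwards [eventually_ge_atTop (1 / |κ.im|)] with r hr
    have hr1 : 1 ≤ (κ.im * r) ^ 2 := by
      rw [div_le_iff₀' (abs_pos.mpr him)] at hr
      simpa only [mul_pow, sq_abs] using one_le_pow₀ (n := 2) hr
    rw [Real.norm_of_nonneg (sq_nonneg _), hsq]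
    nlinarith [Real.sq_le_sinh_sq (κ.im * r), sq_nonneg (Real.sin (κ.re * r))]
  · intro hint
    refine Real.not_integrableOn_Ioi_sin_mul_sq hre c (hint.mono' (by fun_prop) ?_)
    refine Eventually.of_forall fun r => ?_
    rw [Real.norm_of_nonneg (sq_nonneg _), hsq]
    exact le_add_of_nonneg_right (sq_nonneg _)

theorem sq_norm_le_mul_sq_norm_div {w : ℂ} {r : ℝ} (hr : 1 < r) :
    ‖w‖ ^ 2 ≤ r ^ 3 / (r - 1) * ‖w / (r : ℂ)‖ ^ 2 := by
  have hr0 : 0 < r := by linarith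
  have hweight : r ^ 3 / (r - 1) * ‖w / (r : ℂ)‖ ^ 2 = r / (r - 1) * ‖w‖ ^ 2 := by
    rw [norm_div, Complex.norm_real, Real.norm_of_nonneg hr0.le]
    field_simp
  rw [hweight]
  exact le_mul_of_one_le_left (sq_nonneg _) ((one_le_div (by linarith)).mpr (by linarith))

/-- For `κ ≠ 0`, the large-`r` Klein–Gordon radial solution `sin(κr)/r` fails
square integrability: `r³/(r−1)·|sin(κr)/r|² = r/(r−1)·|sin(κr)|²` is not
integrable on `(2, ∞)`, so the solution does not belong to the Hilbert
space. -/
theorem ks_kg_not_square_integrable_at_infinity (κ : ℂ) (hκ : κ ≠ 0) :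
    ¬ IntegrableOn
        (fun r : ℝ => r ^ 3 / (r - 1) * ‖Complex.sin (κ * r) / (r : ℂ)‖ ^ 2)
        (Set.Ioi 2) volume := by
  intro hint
  refine Complex.not_integrableOn_Ioi_sq_norm_sin_mul hκ 2 (hint.mono' (by fun_prop) ?_)
  filter_upwards [ae_restrict_mem measurableSet_Ioi] with r hr
  rw [Real.norm_of_nonneg (sq_nonneg _)]
  exact sq_norm_le_mul_sq_norm_div (by linarith [mem_Ioi.mp hr])
end

section
/- Let l ∈ ℕ with l ≥ 1 and m̃ ∈ ℝ, and define V(r) = l(l+1)(1 − √(2r))/r² + 1/√(2r) + m̃²(1 − √(2r)). Then there exists δ with 0 < δ < 1/2 such that V(r) ≥ (3/4)/r² for all r ∈ (0, δ); hence by the Reed–Simon limit-point criterion at zero, the Klein–Gordon Hamiltonian is in the limit-point case at r = 0. -/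
/-- For `l ≥ 1`, the near-singularity Klein–Gordon effective potential
`V(r) = l(l+1)(1 − √(2r))/r² + 1/√(2r) + m̃²(1 − √(2r))` satisfies
`V(r) ≥ (3/4)/r²` on some interval `(0, δ)` with `0 < δ < 1/2`; hence by the
Reed–Simon criterion the Hamiltonian is in the limit-point case at zero. -/
theorem ks_kg_limit_point_at_zero (l : ℕ) (hl : 1 ≤ l) (m : ℝ) :
    ∃ δ : ℝ, 0 < δ ∧ δ < 1 / 2 ∧
      ∀ r : ℝ, r ∈ Set.Ioo 0 δ →
        (l * (l + 1) : ℝ) * (1 - Real.sqrt (2 * r)) / r ^ 2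
            + 1 / Real.sqrt (2 * r) + m ^ 2 * (1 - Real.sqrt (2 * r))
          ≥ (3 / 4) / r ^ 2 := by
  refine ⟨1/8, by norm_num, by norm_num, ?_⟩
  rintro r ⟨hr0, hr⟩
  have h2r : (0:ℝ) < 2 * r := by linarith
  have hs_pos : 0 < Real.sqrt (2 * r) := Real.sqrt_pos.mpr h2r
  have hs : Real.sqrt (2 * r) < 1 / 2 := by
    rw [show (1:ℝ)/2 = Real.sqrt ((1/2)^2) by
      rw [Real.sqrt_sq]; norm_num]
    exact Real.sqrt_lt_sqrt (le_of_lt h2r) (by nlinarith)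
  have h1 : (1:ℝ)/2 ≤ 1 - Real.sqrt (2 * r) := by linarith
  have hr2 : (0:ℝ) < r ^ 2 := by positivity
  have hl2 : (2:ℝ) ≤ (l : ℝ) * (l + 1) := by
    have : (1:ℝ) ≤ (l:ℝ) := by exact_mod_cast hl
    nlinarith
  have hA : (1:ℝ) / r ^ 2 ≤ (l * (l + 1) : ℝ) * (1 - Real.sqrt (2 * r)) / r ^ 2 := by
    apply div_le_div_of_nonneg_right ?_ hr2.le
    nlinarith
  have hB : (0:ℝ) < 1 / Real.sqrt (2 * r) := by positivity
  have hC : (0:ℝ) ≤ m ^ 2 * (1 - Real.sqrt (2 * r)) := by nlinarith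
  have hD : (3/4 : ℝ) / r ^ 2 ≤ 1 / r ^ 2 := by
    apply div_le_div_of_nonneg_right (by norm_num) hr2.le
  linarith
end

section
/- Let λ ∈ ℝ and ε ∈ {+1, −1}, and with f(r) = 1 − √(2r) define the Dirac effective potential V_ε(r) = f(r)λ²/r² + ελ·f(r)·(d/dr)(√(f(r))/r) for 0 < r < 1/2. Then r²·V_ε(r) → λ² − ελ as r → 0⁺; that is, near the singularity the Dirac effective potentials behave as V± ≈ (λ² ∓ λ)/r². -/
open Filter Real

/-! With `s = √(2r)` and `f = 1 - s`, the chain rule gives `f' = -1/s`, and `r = s²/2` turns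
`f · r² (√f / r)'` into `-(1 - 3s/4) √f`. Hence `r² V(r) = f λ² - ε λ (1 - 3s/4) √f`, a
function continuous at `r = 0`, where it equals `λ² - ε λ`. -/

lemma hasDerivAt_one_sub_sqrt_two_mul {r : ℝ} (hr : 0 < r) :
    HasDerivAt (fun s => 1 - √(2 * s)) (-(1 / √(2 * r))) r := by
  have h : HasDerivAt (fun s => √(2 * s)) (2 / (2 * √(2 * r))) r :=
    (by simpa using (hasDerivAt_id r).const_mul 2 : HasDerivAt (fun s : ℝ => 2 * s) 2 r).sqrt
      (by positivity)
  rw [div_mul_cancel_left₀ two_ne_zero, ← one_div] at h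
  exact h.const_sub 1

lemma one_sub_sqrt_two_mul_mul_sq_mul_deriv {r : ℝ} (hr : 0 < r) (hr' : r < 1 / 2) :
    (1 - √(2 * r)) * (r ^ 2 * deriv (fun s => √(1 - √(2 * s)) / s) r) =
      -((1 - 3 / 4 * √(2 * r)) * √(1 - √(2 * r))) := by
  have hf : 0 < 1 - √(2 * r) := by linarith [(sqrt_lt' one_pos).2 (by linarith : 2 * r < 1 ^ 2)]
  have hd : HasDerivAt (fun s => √(1 - √(2 * s)) / s)
      ((-(1 / √(2 * r)) / (2 * √(1 - √(2 * r))) * r - √(1 - √(2 * r)) * 1) / r ^ 2) r :=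
    ((hasDerivAt_one_sub_sqrt_two_mul hr).sqrt hf.ne').div (hasDerivAt_id r) hr.ne'
  have hs2 : √(2 * r) ^ 2 = 2 * r := sq_sqrt (by positivity)
  have hq2 : √(1 - √(2 * r)) ^ 2 = 1 - √(2 * r) := sq_sqrt hf.le
  rw [hd.deriv]
  field_simp
  linear_combination (2 - 2 * √(2 * r)) * hs2 + 2 * √(2 * r) ^ 2 * hq2

lemma tendsto_reduced_potential_nhds_zero (lam ε : ℝ) :
    Tendsto (fun r : ℝ =>
      (1 - √(2 * r)) * lam ^ 2 - ε * lam * ((1 - 3 / 4 * √(2 * r)) * √(1 - √(2 * r))))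
      (nhds 0) (nhds (lam ^ 2 - ε * lam)) := by
  have h : ContinuousAt (fun r : ℝ =>
      (1 - √(2 * r)) * lam ^ 2 - ε * lam * ((1 - 3 / 4 * √(2 * r)) * √(1 - √(2 * r)))) 0 := by
    fun_prop
  simpa using h.tendsto

theorem ks_dirac_potential_at_zero_general (lam ε : ℝ)
    (f : ℝ → ℝ) (hf : f = fun r : ℝ => 1 - Real.sqrt (2 * r))
    (V : ℝ → ℝ)
    (hV : V = fun r : ℝ =>
      f r * lam ^ 2 / r ^ 2
        + ε * lam * f r * deriv (fun s : ℝ => Real.sqrt (f s) / s) r) :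
    Tendsto (fun r : ℝ => r ^ 2 * V r) (nhdsWithin 0 (Set.Ioo 0 (1 / 2)))
      (nhds (lam ^ 2 - ε * lam)) := by
  refine ((tendsto_reduced_potential_nhds_zero lam ε).mono_left nhdsWithin_le_nhds).congr' ?_
  filter_upwards [self_mem_nhdsWithin] with r ⟨hr, hr'⟩
  subst hf hV
  rw [mul_add, mul_div_cancel₀ _ (pow_ne_zero 2 hr.ne')]
  linear_combination (-(ε * lam)) * one_sub_sqrt_two_mul_mul_sq_mul_deriv hr hr'

/-- With `f(r) = 1 − √(2r)`, the Dirac effective potentials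
`V±(r) = f λ²/r² ± λ f (√f/r)'` on the KS naked-singular spacetime satisfy
`r² V±(r) → λ² ∓ λ` as `r → 0⁺`, i.e. `V± ≈ (λ² ∓ λ)/r²` near the
singularity. -/
theorem ks_dirac_potential_at_zero (lam ε : ℝ) (hε : ε = 1 ∨ ε = -1)
    (f : ℝ → ℝ) (hf : f = fun r : ℝ => 1 - Real.sqrt (2 * r))
    (V : ℝ → ℝ)
    (hV : V = fun r : ℝ =>
      f r * lam ^ 2 / r ^ 2
        + ε * lam * f r * deriv (fun s : ℝ => Real.sqrt (f s) / s) r) :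
    Tendsto (fun r : ℝ => r ^ 2 * V r) (nhdsWithin 0 (Set.Ioo 0 (1 / 2)))
      (nhds (lam ^ 2 - ε * lam)) :=
  ks_dirac_potential_at_zero_general lam ε f hf V hV
end
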